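/- The joint Gromov–Wasserstein objective does not satisfy the triangle inequality. Concretely, for every p ∈ [1,∞), let 𝐗 be the distribution of mm-spaces with a single cluster consisting of the two-point metric space {0, 1} ⊂ ℝ with the uniform probability measure, let 𝐙 be the distribution of mm-spaces with a single cluster consisting of the two-point metric space {0, 2} ⊂ ℝ with the uniform probability measure, and let 𝐘 be the distribution of mm-spaces with two clusters, each a one-point metric space with its unique probability measure and each with weight 1/2. Then JGW_p(𝐗,𝐘) = 0 and JGW_p(𝐙,𝐘) = 0, but JGW_p(𝐗,𝐙) > 0. -/

import Mathlib

/-- A metric measure space: a compact metric space equipped with a Borel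
probability measure of full support. -/
structure MMSpace where
  carrier : Type
  [met : MetricSpace carrier]
  [cpt : CompactSpace carrier]
  [mble : MeasurableSpace carrier]
  [borel : BorelSpace carrier]
  μ : MeasureTheory.Measure carrier
  [prob : MeasureTheory.IsProbabilityMeasure μ]
  fullSupp : μ.IsOpenPosMeasure

attribute [instance] MMSpace.met MMSpace.cpt MMSpace.mble MMSpace.borel MMSpace.prob

/-- A distribution of mm-spaces: finitely many mm-spaces (clusters) with
strictly positive weights summing to one. -/
structure MMDist where
  k : ℕ
  space : Fin k → MMSpace
  s : Fin k → ℝ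
  s_pos : ∀ i, 0 < s i
  s_sum : ∑ i, s i = 1

/-- An embedding of a distribution of mm-spaces: an mm-space together with
isometric embedding functions whose weighted pushforwards recover the measure,
with pairwise disjoint images covering the space. -/
structure MMEmbedding (D : MMDist) where
  tot : MMSpace
  ψ : ∀ i, (D.space i).carrier → tot.carrier
  isom : ∀ i, Isometry (ψ i)
  pushforward :
    ∑ i, ENNReal.ofReal (D.s i) • MeasureTheory.Measure.map (ψ i) (D.space i).μ = tot.μ
  disj : ∀ i j, i ≠ j → Disjoint (Set.range (ψ i)) (Set.range (ψ j))
  cover : ⋃ i, Set.range (ψ i) = Set.univ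

open MeasureTheory

/-- The set of couplings `M(μX, μY)`: Borel probability measures on the product
with the prescribed marginals. -/
def Couplings {X Y : Type} [MeasurableSpace X] [MeasurableSpace Y]
    (μX : Measure X) (μY : Measure Y) : Set (Measure (X × Y)) :=
  {μ | IsProbabilityMeasure μ ∧ μ.map Prod.fst = μX ∧ μ.map Prod.snd = μY}

/-- The Gromov-Wasserstein objective `GW_{Γ,p}` for a loss `Γ`. -/
noncomputable def GWobj {X Y : Type} [MeasurableSpace X] [MeasurableSpace Y]
    (μX : Measure X) (μY : Measure Y) (Γ : X → Y → X → Y → ℝ) (p : ℝ) : ℝ :=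
  sInf ((fun μ : Measure (X × Y) =>
      (1 / 2) * (∫ w : (X × Y) × (X × Y), Γ w.1.1 w.1.2 w.2.1 w.2.2 ∂(μ.prod μ)) ^ (1 / p))
    '' Couplings μX μY)

open scoped Classical in
/-- The loss `Γ*_p` associated to embeddings of two distributions of mm-spaces. -/
noncomputable def GammaStar {DX DY : MMDist} (EX : MMEmbedding DX) (EY : MMEmbedding DY)
    (p : ℝ) (x : EX.tot.carrier) (y : EY.tot.carrier)
    (x' : EX.tot.carrier) (y' : EY.tot.carrier) : ℝ :=
  if (∃ i, x ∈ Set.range (EX.ψ i) ∧ x' ∈ Set.range (EX.ψ i)) ∧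
      (∃ j, y ∈ Set.range (EY.ψ j) ∧ y' ∈ Set.range (EY.ψ j)) then
    |dist x x' - dist y y'| ^ p
  else 0

/-- The joint Gromov-Wasserstein objective computed with given embeddings. -/
noncomputable def JGWwith {DX DY : MMDist} (EX : MMEmbedding DX) (EY : MMEmbedding DY)
    (p : ℝ) : ℝ :=
  GWobj EX.tot.μ EY.tot.μ (GammaStar EX EY p) p

open scoped ENNReal

/-- The two-point mm-space `{a, b} ⊂ ℝ` with the uniform probability measure. -/
noncomputable def twoPointMM (a b : ℝ) : MMSpace where
  carrier := ({a, b} : Set ℝ)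
  μ := (1 / 2 : ℝ≥0∞) • (Measure.dirac ⟨a, by simp⟩ + Measure.dirac ⟨b, by simp⟩)
  prob := by
    constructor
    simp [Measure.add_apply, ENNReal.inv_two_add_inv_two]
  fullSupp := by
    constructor
    intro U hU hne
    obtain ⟨x, hxU⟩ := hne
    have hm : MeasurableSet U := hU.measurableSet
    have hdx : (Measure.dirac x) U = 1 := by
      rw [Measure.dirac_apply' _ hm]; simp [hxU]
    have hsum : (Measure.dirac (⟨a, by simp⟩ : ({a, b} : Set ℝ))) U +
        (Measure.dirac (⟨b, by simp⟩ : ({a, b} : Set ℝ))) U ≠ 0 := by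
      rcases x.2 with h | h
      · have hx : x = (⟨a, by simp⟩ : ({a, b} : Set ℝ)) := Subtype.ext h
        rw [← hx]
        simp [hdx]
      · have hx : x = (⟨b, by simp⟩ : ({a, b} : Set ℝ)) := Subtype.ext h
        rw [← hx]
        intro hcon
        rw [add_comm] at hcon
        simp [hdx] at hcon
    simp only [Measure.smul_apply, Measure.add_apply, smul_eq_mul]
    exact mul_ne_zero (by simp) hsum

/-- The one-point mm-space `{a} ⊂ ℝ` with its unique probability measure. -/
noncomputable def onePointMM (a : ℝ) : MMSpace where
  carrier := ({a} : Set ℝ)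
  μ := Measure.dirac ⟨a, rfl⟩
  fullSupp := by
    constructor
    intro U hU hne
    obtain ⟨x, hxU⟩ := hne
    have hx : x = (⟨a, rfl⟩ : ({a} : Set ℝ)) := Subtype.ext x.2
    rw [Measure.dirac_apply' _ hU.measurableSet]
    simp [← hx, hxU]

/-- The distribution of mm-spaces `𝐗` with a single cluster `{0, 1} ⊂ ℝ`,
uniform measure, weight `1`. -/
noncomputable def distX : MMDist where
  k := 1
  space := fun _ => twoPointMM 0 1
  s := fun _ => 1
  s_pos := fun _ => one_pos
  s_sum := by simp

/-- The distribution of mm-spaces `𝐙` with a single cluster `{0, 2} ⊂ ℝ`,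
uniform measure, weight `1`. -/
noncomputable def distZ : MMDist where
  k := 1
  space := fun _ => twoPointMM 0 2
  s := fun _ => 1
  s_pos := fun _ => one_pos
  s_sum := by simp

/-- The distribution of mm-spaces `𝐘` with two clusters, each a one-point
metric space with its unique probability measure, each of weight `1/2`. -/
noncomputable def distY : MMDist where
  k := 2
  space := fun _ => onePointMM 0
  s := fun _ => 1 / 2
  s_pos := fun _ => by norm_num
  s_sum := by norm_num [Fin.sum_univ_two]

/-!
For `JGW_p(𝐗,𝐘) = 0`, couple the two points of `X` with the two points of `Y`. These lie in
different clusters of `𝐘`, so `Γ*_p` vanishes between them, and it vanishes on the diagonal; the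
coupling has cost zero. For `JGW_p(𝐗,𝐙) > 0`, both distributions are single clusters, so
`Γ*_p = |d_X - d_Z|^p`, which is at least `1` off the diagonal because distances are `0` or `1`
in `X` and `0` or `2` in `Z`. A coupling has atoms of mass at most `1/2`, so its square puts mass at
least `1/2` off the diagonal, and every coupling costs at least `1/2`.
-/

open Set

section HalfDirac

variable {α : Type*} [MeasurableSpace α]

lemma isProbabilityMeasure_half_dirac (u v : α) :
    IsProbabilityMeasure ((1 / 2 : ℝ≥0∞) • (Measure.dirac u + Measure.dirac v)) :=
  ⟨by simp [ENNReal.inv_two_add_inv_two]⟩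

lemma map_half_dirac {β : Type*} [MeasurableSpace β] {f : α → β} (hf : Measurable f) (u v : α) :
    ((1 / 2 : ℝ≥0∞) • (Measure.dirac u + Measure.dirac v)).map f =
      (1 / 2 : ℝ≥0∞) • (Measure.dirac (f u) + Measure.dirac (f v)) := by
  rw [Measure.map_smul, Measure.map_add _ _ hf, Measure.map_dirac' hf, Measure.map_dirac' hf]

lemma half_dirac_singleton_le [MeasurableSingletonClass α] {u v : α} (huv : u ≠ v) (w : α) :
    ((1 / 2 : ℝ≥0∞) • (Measure.dirac u + Measure.dirac v)) {w} ≤ 1 / 2 := by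
  have : (Measure.dirac u + Measure.dirac v) {w} ≤ 1 := by
    rcases eq_or_ne u w with rfl | hu
    · simp [huv.symm]
    · rcases eq_or_ne v w with rfl | hv
      · simp [hu]
      · simp [hu, hv]
  simpa [mul_add] using mul_le_mul_right this (1 / 2 : ℝ≥0∞)

lemma integral_prod_self_half_dirac [MeasurableSingletonClass α] (u v : α) (f : α × α → ℝ) :
    ∫ w, f w ∂(((1 / 2 : ℝ≥0∞) • (Measure.dirac u + Measure.dirac v)).prod
        ((1 / 2 : ℝ≥0∞) • (Measure.dirac u + Measure.dirac v))) =
      (f (u, u) + f (u, v) + f (v, u) + f (v, v)) / 4 := by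
  have hint : ∀ w, Integrable f (Measure.dirac w) := fun w => integrable_dirac enorm_lt_top
  rw [Measure.prod_smul_left, Measure.prod_smul_right, Measure.add_prod, Measure.prod_add,
    Measure.prod_add, Measure.dirac_prod_dirac, Measure.dirac_prod_dirac, Measure.dirac_prod_dirac,
    Measure.dirac_prod_dirac, integral_smul_measure, integral_smul_measure,
    integral_add_measure ((hint _).add_measure (hint _)) ((hint _).add_measure (hint _)),
    integral_add_measure (hint _) (hint _), integral_add_measure (hint _) (hint _)]
  simp only [integral_dirac]
  norm_num
  ring

end HalfDirac

section Diagonal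

variable {α : Type*} [MeasurableSpace α] [MeasurableEq α]

lemma prod_self_diagonal_le (ν : Measure α) [IsProbabilityMeasure ν] {m : ℝ≥0∞}
    (hν : ∀ w, ν {w} ≤ m) : ν.prod ν (diagonal α) ≤ m := by
  have hslice : ∀ w, Prod.mk w ⁻¹' diagonal α = {w} := fun w => by ext; simp [eq_comm]
  calc ν.prod ν (diagonal α) = ∫⁻ w, ν {w} ∂ν := by
        simp only [Measure.prod_apply measurableSet_diagonal, hslice]
    _ ≤ ∫⁻ _, m ∂ν := lintegral_mono hν
    _ = m := by simp

lemma one_sub_measureReal_diagonal_le_integral (μ : Measure (α × α)) [IsProbabilityMeasure μ]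
    {f : α × α → ℝ} (hf : Integrable f μ) (hf0 : 0 ≤ f)
    (hf1 : ∀ w : α × α, w.1 ≠ w.2 → 1 ≤ f w) :
    1 - μ.real (diagonal α) ≤ ∫ w, f w ∂μ := by
  have hind : (diagonal α)ᶜ.indicator 1 ≤ f := fun w => by
    by_cases hw : w ∈ diagonal α
    · simpa [hw] using hf0 w
    · simpa [hw] using hf1 w hw
  calc 1 - μ.real (diagonal α) = μ.real (diagonal α)ᶜ :=
        (probReal_compl_eq_one_sub measurableSet_diagonal).symm
    _ = ∫ w, (diagonal α)ᶜ.indicator 1 w ∂μ := by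
        rw [integral_indicator_one measurableSet_diagonal.compl]
    _ ≤ ∫ w, f w ∂μ :=
        integral_mono ((integrable_const 1).indicator measurableSet_diagonal.compl) hf hind

end Diagonal

section Couplings

variable {X Y : Type} [MeasurableSpace X] [MeasurableSpace Y] {μX : Measure X} {μY : Measure Y}

lemma prod_mem_couplings [IsProbabilityMeasure μX] [IsProbabilityMeasure μY] :
    μX.prod μY ∈ Couplings μX μY :=
  ⟨inferInstance, by simp, by simp⟩

lemma half_dirac_mem_couplings {x₀ x₁ : X} {y₀ y₁ : Y} :
    (1 / 2 : ℝ≥0∞) • (Measure.dirac (x₀, y₀) + Measure.dirac (x₁, y₁)) ∈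
      Couplings ((1 / 2 : ℝ≥0∞) • (Measure.dirac x₀ + Measure.dirac x₁))
        ((1 / 2 : ℝ≥0∞) • (Measure.dirac y₀ + Measure.dirac y₁)) :=
  ⟨isProbabilityMeasure_half_dirac _ _, map_half_dirac measurable_fst _ _,
    map_half_dirac measurable_snd _ _⟩

lemma measure_singleton_le_of_mem_couplings [MeasurableSingletonClass X] {μ : Measure (X × Y)}
    (hμ : μ ∈ Couplings μX μY) (w : X × Y) : μ {w} ≤ μX {w.1} := by
  rw [← hμ.2.1, Measure.map_apply measurable_fst (measurableSet_singleton _)]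
  exact measure_mono fun q hq => by simp_all

/-- Each atom of `μ` has mass at most `1/2`, hence so does the diagonal under `μ ⊗ μ`. -/
lemma half_le_integral_of_mem_couplings [MeasurableSingletonClass X] [MeasurableEq (X × Y)]
    {μ : Measure (X × Y)} (hμ : μ ∈ Couplings μX μY) (hX : ∀ x, μX {x} ≤ 1 / 2)
    {f : (X × Y) × (X × Y) → ℝ} (hf : Integrable f (μ.prod μ)) (hf0 : 0 ≤ f)
    (hf1 : ∀ w : (X × Y) × (X × Y), w.1 ≠ w.2 → 1 ≤ f w) :
    1 / 2 ≤ ∫ w, f w ∂(μ.prod μ) := by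
  have := hμ.1
  have hdiag : (μ.prod μ).real (diagonal (X × Y)) ≤ 1 / 2 := by
    have := prod_self_diagonal_le μ fun w =>
      (measure_singleton_le_of_mem_couplings hμ w).trans (hX w.1)
    rw [measureReal_def]
    exact (ENNReal.toReal_mono (by norm_num) this).trans (by norm_num)
  linarith [one_sub_measureReal_diagonal_le_integral (μ.prod μ) hf hf0 hf1]

lemma GWobj_eq_zero {Γ : X → Y → X → Y → ℝ} {p : ℝ} (hΓ : ∀ x y x' y', 0 ≤ Γ x y x' y')
    (hp : p ≠ 0) {μ : Measure (X × Y)} (hμ : μ ∈ Couplings μX μY)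
    (h : ∫ w, Γ w.1.1 w.1.2 w.2.1 w.2.2 ∂(μ.prod μ) = 0) : GWobj μX μY Γ p = 0 := by
  refine IsLeast.csInf_eq ⟨⟨μ, hμ, ?_⟩, ?_⟩
  · simp [h, Real.zero_rpow (inv_ne_zero hp)]
  · rintro _ ⟨ν, -, rfl⟩
    exact mul_nonneg (by norm_num) (Real.rpow_nonneg (integral_nonneg fun w => hΓ _ _ _ _) _)

lemma GWobj_pos [IsProbabilityMeasure μX] [IsProbabilityMeasure μY]
    {Γ : X → Y → X → Y → ℝ} {p : ℝ} (hp : 0 ≤ p) {ε : ℝ} (hε : 0 < ε)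
    (h : ∀ μ ∈ Couplings μX μY, ε ≤ ∫ w, Γ w.1.1 w.1.2 w.2.1 w.2.2 ∂(μ.prod μ)) :
    0 < GWobj μX μY Γ p := by
  have hbound : ∀ v ∈ (fun μ : Measure (X × Y) =>
      (1 / 2) * (∫ w, Γ w.1.1 w.1.2 w.2.1 w.2.2 ∂(μ.prod μ)) ^ (1 / p)) '' Couplings μX μY,
      1 / 2 * ε ^ (1 / p) ≤ v := by
    rintro _ ⟨μ, hμ, rfl⟩
    exact mul_le_mul_of_nonneg_left (Real.rpow_le_rpow hε.le (h μ hμ) (by positivity))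
      (by norm_num)
  exact (by positivity : (0 : ℝ) < 1 / 2 * ε ^ (1 / p)).trans_le
    (le_csInf ⟨_, _, prod_mem_couplings, rfl⟩ hbound)

end Couplings

namespace MMEmbedding

variable {D : MMDist} (E : MMEmbedding D)

lemma measurable_ψ (i : Fin D.k) : Measurable (E.ψ i) := (E.isom i).continuous.measurable

lemma eq_of_mem_range {i j : Fin D.k} {x : E.tot.carrier} (hi : x ∈ range (E.ψ i))
    (hj : x ∈ range (E.ψ j)) : i = j :=
  by_contra fun hij => Set.disjoint_left.mp (E.disj i j hij) hi hj

lemma finite_tot (hD : ∀ i, Finite (D.space i).carrier) : Finite E.tot.carrier := by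
  rw [← Set.finite_univ_iff, ← E.cover]
  exact Set.finite_iUnion fun i => Set.finite_range (E.ψ i)

end MMEmbedding

section GammaStar

variable {DX DY : MMDist} (EX : MMEmbedding DX) (EY : MMEmbedding DY) {p : ℝ}

lemma gammaStar_nonneg (x : EX.tot.carrier) (y : EY.tot.carrier) (x' : EX.tot.carrier)
    (y' : EY.tot.carrier) : 0 ≤ GammaStar EX EY p x y x' y' := by
  unfold GammaStar
  split_ifs <;> positivity

lemma gammaStar_self (hp : p ≠ 0) (x : EX.tot.carrier) (y : EY.tot.carrier) :
    GammaStar EX EY p x y x y = 0 := by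
  unfold GammaStar
  split_ifs <;> simp [Real.zero_rpow hp]

lemma gammaStar_eq_zero_of_ne {j j' : Fin DY.k} (hjj' : j ≠ j') {y y' : EY.tot.carrier}
    (hy : y ∈ range (EY.ψ j)) (hy' : y' ∈ range (EY.ψ j')) (x x' : EX.tot.carrier) :
    GammaStar EX EY p x y x' y' = 0 := by
  unfold GammaStar
  rw [if_neg]
  rintro ⟨-, i, hi, hi'⟩
  exact hjj' ((EY.eq_of_mem_range hy hi).trans (EY.eq_of_mem_range hi' hy'))

end GammaStar

lemma JGWwith_eq_zero_of_half_dirac {DX DY : MMDist} {EX : MMEmbedding DX} {EY : MMEmbedding DY}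
    {p : ℝ} (hp : p ≠ 0) {x₀ x₁ : EX.tot.carrier} {y₀ y₁ : EY.tot.carrier}
    (hX : EX.tot.μ = (1 / 2 : ℝ≥0∞) • (Measure.dirac x₀ + Measure.dirac x₁))
    (hY : EY.tot.μ = (1 / 2 : ℝ≥0∞) • (Measure.dirac y₀ + Measure.dirac y₁))
    (h₀₁ : GammaStar EX EY p x₀ y₀ x₁ y₁ = 0) (h₁₀ : GammaStar EX EY p x₁ y₁ x₀ y₀ = 0) :
    JGWwith EX EY p = 0 := by
  have hμ := half_dirac_mem_couplings (x₀ := x₀) (x₁ := x₁) (y₀ := y₀) (y₁ := y₁)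
  rw [← hX, ← hY] at hμ
  refine GWobj_eq_zero (gammaStar_nonneg EX EY) hp hμ ?_
  rw [integral_prod_self_half_dirac]
  simp [h₀₁, h₁₀, gammaStar_self EX EY hp]

-- Reducible, so that `Fin (MMDist.single M).k` is `Fin 1` and `distX`, `distZ` unfold to it.
abbrev MMDist.single (M : MMSpace) : MMDist where
  k := 1
  space := fun _ => M
  s := fun _ => 1
  s_pos := fun _ => one_pos
  s_sum := by simp

namespace MMEmbedding

variable {M : MMSpace} (E : MMEmbedding (MMDist.single M))

lemma mem_range_ψ_single (x : E.tot.carrier) : x ∈ range (E.ψ 0) := by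
  obtain ⟨i, hi⟩ := mem_iUnion.mp (E.cover ▸ mem_univ x)
  rwa [Subsingleton.elim i 0] at hi

lemma tot_μ_single : E.tot.μ = M.μ.map (E.ψ 0) := by
  simpa using E.pushforward.symm

end MMEmbedding

lemma gammaStar_single {M N : MMSpace} (EX : MMEmbedding (MMDist.single M))
    (EY : MMEmbedding (MMDist.single N)) (p : ℝ) (x : EX.tot.carrier) (y : EY.tot.carrier)
    (x' : EX.tot.carrier) (y' : EY.tot.carrier) :
    GammaStar EX EY p x y x' y' = |dist x x' - dist y y'| ^ p := by
  rw [GammaStar, if_pos ⟨⟨0, EX.mem_range_ψ_single x, EX.mem_range_ψ_single x'⟩,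
    ⟨0, EY.mem_range_ψ_single y, EY.mem_range_ψ_single y'⟩⟩]

def twoPointMM.left (a b : ℝ) : (twoPointMM a b).carrier := ⟨a, mem_insert a {b}⟩

def twoPointMM.right (a b : ℝ) : (twoPointMM a b).carrier := ⟨b, mem_insert_of_mem a rfl⟩

lemma twoPointMM.μ_eq (a b : ℝ) : (twoPointMM a b).μ =
    (1 / 2 : ℝ≥0∞) • (Measure.dirac (twoPointMM.left a b) + Measure.dirac (twoPointMM.right a b)) :=
  rfl

lemma finite_twoPointMM (a b : ℝ) : Finite (twoPointMM a b).carrier :=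
  show Finite ({a, b} : Set ℝ) from inferInstance

namespace MMEmbedding

variable {a b : ℝ} (E : MMEmbedding (MMDist.single (twoPointMM a b)))

lemma tot_μ_single_twoPoint :
    E.tot.μ = (1 / 2 : ℝ≥0∞) • (Measure.dirac (E.ψ 0 (twoPointMM.left a b)) +
      Measure.dirac (E.ψ 0 (twoPointMM.right a b))) := by
  rw [E.tot_μ_single, twoPointMM.μ_eq, map_half_dirac (E.measurable_ψ 0)]

lemma measure_singleton_le_half (hab : a ≠ b) (x : E.tot.carrier) : E.tot.μ {x} ≤ 1 / 2 := by
  rw [E.tot_μ_single_twoPoint]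
  exact half_dirac_singleton_le ((E.isom 0).injective.ne fun h => hab (congrArg Subtype.val h)) x

lemma dist_eq_zero_or_eq_abs_sub (x x' : E.tot.carrier) : dist x x' = 0 ∨ dist x x' = |a - b| := by
  obtain ⟨s, rfl⟩ := E.mem_range_ψ_single x
  obtain ⟨t, rfl⟩ := E.mem_range_ψ_single x'
  rw [(E.isom 0).dist_eq]
  obtain ⟨s, rfl | rfl⟩ := s <;> obtain ⟨t, rfl | rfl⟩ := t <;>
    erw [Subtype.dist_eq, Real.dist_eq] <;> simp [abs_sub_comm]

end MMEmbedding

lemma tot_μ_distY (E : MMEmbedding distY) :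
    E.tot.μ = (1 / 2 : ℝ≥0∞) •
      (Measure.dirac (E.ψ (0 : Fin 2) ⟨0, rfl⟩) + Measure.dirac (E.ψ (1 : Fin 2) ⟨0, rfl⟩)) := by
  rw [← E.pushforward, smul_add]
  erw [Fin.sum_univ_two, Measure.map_dirac' (E.measurable_ψ (0 : Fin 2)),
    Measure.map_dirac' (E.measurable_ψ (1 : Fin 2))]
  simp [distY]

lemma JGWwith_single_twoPoint_distY_eq_zero {a b p : ℝ} (hp : p ≠ 0)
    (EX : MMEmbedding (MMDist.single (twoPointMM a b))) (EY : MMEmbedding distY) :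
    JGWwith EX EY p = 0 :=
  JGWwith_eq_zero_of_half_dirac hp EX.tot_μ_single_twoPoint (tot_μ_distY EY)
    (gammaStar_eq_zero_of_ne EX EY (by decide : (0 : Fin 2) ≠ 1) ⟨_, rfl⟩ ⟨_, rfl⟩ _ _)
    (gammaStar_eq_zero_of_ne EX EY (by decide : (1 : Fin 2) ≠ 0) ⟨_, rfl⟩ ⟨_, rfl⟩ _ _)

lemma one_le_gammaStar_single_twoPoint_of_ne {p : ℝ} (hp : 0 ≤ p)
    (EX : MMEmbedding (MMDist.single (twoPointMM 0 1)))
    (EZ : MMEmbedding (MMDist.single (twoPointMM 0 2))) {x x' : EX.tot.carrier}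
    {z z' : EZ.tot.carrier} (h : (x, z) ≠ (x', z')) : 1 ≤ GammaStar EX EZ p x z x' z' := by
  rw [gammaStar_single]
  refine Real.one_le_rpow ?_ hp
  rcases EX.dist_eq_zero_or_eq_abs_sub x x' with hx | hx <;>
    rcases EZ.dist_eq_zero_or_eq_abs_sub z z' with hz | hz
  · exact absurd (Prod.ext (dist_eq_zero.mp hx) (dist_eq_zero.mp hz)) h
  all_goals rw [hx, hz]; norm_num

lemma JGWwith_single_twoPoint_pos {p : ℝ} (hp : 0 ≤ p)
    (EX : MMEmbedding (MMDist.single (twoPointMM 0 1)))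
    (EZ : MMEmbedding (MMDist.single (twoPointMM 0 2))) : 0 < JGWwith EX EZ p := by
  have := EX.finite_tot fun _ => finite_twoPointMM 0 1
  have := EZ.finite_tot fun _ => finite_twoPointMM 0 2
  refine GWobj_pos hp one_half_pos fun μ hμ => ?_
  have := hμ.1
  exact half_le_integral_of_mem_couplings hμ (EX.measure_singleton_le_half zero_ne_one)
    Integrable.of_finite (fun w => gammaStar_nonneg EX EZ _ _ _ _)
    fun w hw => one_le_gammaStar_single_twoPoint_of_ne hp EX EZ hw

/-- The joint Gromov-Wasserstein objective does not satisfy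
the triangle inequality: with `𝐗 = {0,1}` (one cluster, uniform), `𝐙 = {0,2}`
(one cluster, uniform) and `𝐘` two one-point clusters of weight `1/2` each, one
has `JGW_p(𝐗,𝐘) = 0` and `JGW_p(𝐙,𝐘) = 0`, but `JGW_p(𝐗,𝐙) > 0`. -/
theorem jgw_triangle_inequality_fails (p : ℝ) (hp : 1 ≤ p) :
    (∀ (EX : MMEmbedding distX) (EY : MMEmbedding distY), JGWwith EX EY p = 0) ∧
    (∀ (EZ : MMEmbedding distZ) (EY : MMEmbedding distY), JGWwith EZ EY p = 0) ∧
    (∀ (EX : MMEmbedding distX) (EZ : MMEmbedding distZ), 0 < JGWwith EX EZ p) :=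
  ⟨fun EX EY => JGWwith_single_twoPoint_distY_eq_zero (by linarith) EX EY,
    fun EZ EY => JGWwith_single_twoPoint_distY_eq_zero (by linarith) EZ EY,
    fun EX EZ => JGWwith_single_twoPoint_pos (by linarith) EX EZ⟩
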